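/- arXiv:math/0403362 — 2 statements merged into one kernel-verified Lean document; each statement's English description precedes it below -/
import Mathlib

section
/- Let n ≥ 1, m ≥ 1, and α ≥ 0 be integers. Then at every point z ∈ ℂⁿ ∖ {0}, Σ_{j=1}^n ∂/∂z̄_j [ z̄_n^{mα} · (∏_{i=1}^n z̄_i^{m-1}) · z̄_j · r_m(z)^{-(α+n)} ] = 0. (This scalar divergence identity expresses that the (0, n−1)-form u_{α,m}(1, …, n) = (α+n−1)! z̄_n^{mα} (z̄_1⋯z̄_n)^{m-1} r_m^{-(α+n)} Σ_{j=1}^n (−1)^j z̄_j dz̄_1∧…∧(dz̄_j omitted)∧…∧dz̄_n is ∂̄-closed on ℂⁿ ∖ {0}.) -/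
/-!
Write the integrand as `z̄ⱼ g` with `g = z̄ₙ^{mα} (∏ᵢ z̄ᵢ^{m-1}) r_m^{-(α+n)}`, which does not
depend on `j`. The product rule gives `∑ⱼ ∂̄ⱼ (z̄ⱼ g) = n g + E g`, where `E = ∑ⱼ z̄ⱼ ∂/∂z̄ⱼ` is
the antiholomorphic Euler operator. `E` is a derivation with `E wᵢ = 0` and `E w̄ᵢ = w̄ᵢ`, so it
multiplies `w̄ᵢ` by `1` and `r_m = ∑ᵢ (wᵢ w̄ᵢ)^m` by `m`, and hence products and (negative)
powers of them by their antiholomorphic degree. That of `g` is `mα + n(m-1) - m(α+n) = -n`.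
-/

open Complex

/-- The Wirtinger derivative `∂f/∂z̄ⱼ = (1/2)(∂f/∂xⱼ + i ∂f/∂yⱼ)` of a function
`f : ℂⁿ → ℂ` at `z` with respect to the `j`-th antiholomorphic coordinate, expressed via
the real Fréchet derivative. -/
noncomputable def wirtingerBar {n : ℕ} (f : (Fin n → ℂ) → ℂ) (z : Fin n → ℂ) (j : Fin n) : ℂ :=
  (1 / 2) * (fderiv ℝ f z (Pi.single j 1) + Complex.I * fderiv ℝ f z (Pi.single j Complex.I))

open ComplexConjugate

variable {n : ℕ} {f g : (Fin n → ℂ) → ℂ} {z : Fin n → ℂ}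

theorem wirtingerBar_mul (hf : DifferentiableAt ℝ f z) (hg : DifferentiableAt ℝ g z)
    (j : Fin n) :
    wirtingerBar (fun w => f w * g w) z j = f z * wirtingerBar g z j + wirtingerBar f z j * g z := by
  simp only [wirtingerBar, fderiv_fun_mul hf hg, add_apply, smul_apply, smul_eq_mul]
  ring

theorem wirtingerBar_comp {φ : ℂ → ℂ} (hφ : DifferentiableAt ℂ φ (f z))
    (hf : DifferentiableAt ℝ f z) (j : Fin n) :
    wirtingerBar (fun w => φ (f w)) z j = deriv φ (f z) * wirtingerBar f z j := by
  have h : HasFDerivAt (fun w => φ (f w)) _ z :=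
    (hφ.hasDerivAt.hasFDerivAt.restrictScalars ℝ).comp z hf.hasFDerivAt
  simp only [wirtingerBar, h.fderiv, ContinuousLinearMap.comp_apply, smul_eq_mul,
    ContinuousLinearMap.coe_restrictScalars', ContinuousLinearMap.toSpanSingleton_apply]
  ring

theorem wirtingerBar_conj_apply (i j : Fin n) :
    wirtingerBar (fun w => conj (w i)) z j = if i = j then 1 else 0 := by
  have h : HasFDerivAt (fun w : Fin n → ℂ => conj (w i))
      (conjCLE.toContinuousLinearMap.comp (ContinuousLinearMap.proj i)) z :=
    (conjCLE.toContinuousLinearMap.comp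
      (ContinuousLinearMap.proj (R := ℝ) (φ := fun _ : Fin n => ℂ) i)).hasFDerivAt
  simp only [wirtingerBar, h.fderiv, ContinuousLinearMap.comp_apply, ContinuousLinearMap.proj_apply,
    ContinuousLinearEquiv.coe_coe, conjCLE_apply, Pi.single_apply]
  split_ifs <;> norm_num [conj_I]

theorem wirtingerBar_apply (i j : Fin n) :
    wirtingerBar (fun w => w i) z j = 0 := by
  have h : HasFDerivAt (fun w : Fin n → ℂ => w i) (ContinuousLinearMap.proj (R := ℝ) i) z :=
    (ContinuousLinearMap.proj (R := ℝ) (φ := fun _ : Fin n => ℂ) i).hasFDerivAt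
  simp only [wirtingerBar, h.fderiv, ContinuousLinearMap.proj_apply, Pi.single_apply]
  split_ifs <;> simp

theorem wirtingerBar_sum {ι : Type*} (s : Finset ι) {f : ι → (Fin n → ℂ) → ℂ}
    (hf : ∀ i ∈ s, DifferentiableAt ℝ (f i) z) (j : Fin n) :
    wirtingerBar (fun w => ∑ i ∈ s, f i w) z j = ∑ i ∈ s, wirtingerBar (f i) z j := by
  simp only [wirtingerBar, fderiv_fun_sum hf, FunLike.coe_sum, Finset.sum_apply,
    Finset.mul_sum, ← Finset.sum_add_distrib]

noncomputable def eulerBar (f : (Fin n → ℂ) → ℂ) (z : Fin n → ℂ) : ℂ :=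
  ∑ j, conj (z j) * wirtingerBar f z j

theorem eulerBar_mul (hf : DifferentiableAt ℝ f z) (hg : DifferentiableAt ℝ g z) :
    eulerBar (fun w => f w * g w) z = f z * eulerBar g z + eulerBar f z * g z := by
  simp only [eulerBar, wirtingerBar_mul hf hg, Finset.mul_sum, Finset.sum_mul,
    ← Finset.sum_add_distrib]
  congr 1; ext j; ring

theorem eulerBar_comp {φ : ℂ → ℂ} (hφ : DifferentiableAt ℂ φ (f z))
    (hf : DifferentiableAt ℝ f z) :
    eulerBar (fun w => φ (f w)) z = deriv φ (f z) * eulerBar f z := by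
  simp only [eulerBar, wirtingerBar_comp hφ hf, Finset.mul_sum]
  congr 1; ext j; ring

theorem eulerBar_conj_apply (i : Fin n) : eulerBar (fun w => conj (w i)) z = conj (z i) := by
  simp [eulerBar, wirtingerBar_conj_apply]

theorem eulerBar_apply (i : Fin n) : eulerBar (fun w => w i) z = 0 := by
  simp [eulerBar, wirtingerBar_apply]

theorem eulerBar_sum {ι : Type*} (s : Finset ι) {f : ι → (Fin n → ℂ) → ℂ}
    (hf : ∀ i ∈ s, DifferentiableAt ℝ (f i) z) :
    eulerBar (fun w => ∑ i ∈ s, f i w) z = ∑ i ∈ s, eulerBar (f i) z := by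
  simp only [eulerBar, wirtingerBar_sum s hf, Finset.mul_sum]
  exact Finset.sum_comm

section Homogeneous

variable {c d : ℂ}

theorem eulerBar_mul_of_eq (hf : DifferentiableAt ℝ f z) (hg : DifferentiableAt ℝ g z)
    (hfc : eulerBar f z = c * f z) (hgd : eulerBar g z = d * g z) :
    eulerBar (fun w => f w * g w) z = (c + d) * (f z * g z) := by
  rw [eulerBar_mul hf hg, hfc, hgd]; ring

theorem eulerBar_pow_of_eq (hf : DifferentiableAt ℝ f z) (hfc : eulerBar f z = c * f z) (e : ℕ) :
    eulerBar (fun w => f w ^ e) z = (e * c) * f z ^ e := by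
  rw [eulerBar_comp (differentiableAt_pow e) hf, deriv_pow_field, hfc]
  cases e with
  | zero => simp
  | succ e => rw [pow_succ]; push_cast; ring

theorem eulerBar_zpow_of_eq (hf : DifferentiableAt ℝ f z) (hfz : f z ≠ 0)
    (hfc : eulerBar f z = c * f z) (N : ℤ) :
    eulerBar (fun w => f w ^ N) z = (N * c) * f z ^ N := by
  rw [eulerBar_comp (differentiableAt_zpow.2 (Or.inl hfz)) hf, deriv_zpow, hfc,
    zpow_sub_one₀ hfz]
  field_simp

theorem eulerBar_prod_of_eq {ι : Type*} (s : Finset ι) {f : ι → (Fin n → ℂ) → ℂ} {c : ι → ℂ}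
    (hf : ∀ i ∈ s, DifferentiableAt ℝ (f i) z) (hfc : ∀ i ∈ s, eulerBar (f i) z = c i * f i z) :
    eulerBar (fun w => ∏ i ∈ s, f i w) z = (∑ i ∈ s, c i) * ∏ i ∈ s, f i z := by
  classical
  induction s using Finset.induction_on with
  | empty => simp [eulerBar, wirtingerBar]
  | insert a s ha ih =>
    simp only [Finset.prod_insert ha, Finset.sum_insert ha]
    rw [Finset.forall_mem_insert] at hf hfc
    have hprod : DifferentiableAt ℝ (fun w => ∏ i ∈ s, f i w) z :=
      (HasFDerivAt.finsetProd fun i hi => (hf.2 i hi).hasFDerivAt).differentiableAt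
    exact eulerBar_mul_of_eq hf.1 hprod hfc.1 (ih hf.2 hfc.2)

theorem eulerBar_sum_of_eq {ι : Type*} (s : Finset ι) {f : ι → (Fin n → ℂ) → ℂ}
    (hf : ∀ i ∈ s, DifferentiableAt ℝ (f i) z) (hfc : ∀ i ∈ s, eulerBar (f i) z = c * f i z) :
    eulerBar (fun w => ∑ i ∈ s, f i w) z = c * ∑ i ∈ s, f i z := by
  rw [eulerBar_sum s hf, Finset.mul_sum]
  exact Finset.sum_congr rfl hfc

end Homogeneous

theorem sum_wirtingerBar_conj_mul (hg : DifferentiableAt ℝ g z) :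
    ∑ j, wirtingerBar (fun w => conj (w j) * g w) z j = n * g z + eulerBar g z := by
  have hconj (j : Fin n) : DifferentiableAt ℝ (fun w : Fin n → ℂ => conj (w j)) z := by fun_prop
  simp only [wirtingerBar_mul (hconj _) hg, wirtingerBar_conj_apply, if_true, one_mul,
    Finset.sum_add_distrib, Finset.sum_const, Finset.card_univ, Fintype.card_fin, nsmul_eq_mul,
    eulerBar]
  ring

theorem eulerBar_conj_pow_mul_prod_conj_pow (k : Fin n) (a b : ℕ) :
    eulerBar (fun w => conj (w k) ^ a * ∏ i, conj (w i) ^ b) z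
      = (a + n * b) * (conj (z k) ^ a * ∏ i, conj (z i) ^ b) := by
  have hconj (i : Fin n) : DifferentiableAt ℝ (fun w : Fin n → ℂ => conj (w i)) z := by fun_prop
  have hpow (i : Fin n) (e : ℕ) : eulerBar (fun w => conj (w i) ^ e) z = e * conj (z i) ^ e := by
    simpa only [mul_one] using
      eulerBar_pow_of_eq (hconj i) ((eulerBar_conj_apply i).trans (one_mul _).symm) e
  have hprod := eulerBar_prod_of_eq (f := fun i w => conj (w i) ^ b) Finset.univ
    (fun i _ => by fun_prop) (fun i _ => hpow i b)
  rw [eulerBar_mul_of_eq (by fun_prop) (by fun_prop) (hpow k a) hprod]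
  simp

/-- `r_m`, written as a polynomial in `w` and `w̄` so that its smoothness is visible. -/
noncomputable def normPowSum (m : ℕ) (w : Fin n → ℂ) : ℂ :=
  ∑ i, (w i * conj (w i)) ^ m

theorem ofReal_sum_norm_pow_eq_normPowSum (m : ℕ) (w : Fin n → ℂ) :
    ((∑ i, ‖w i‖ ^ (2 * m) : ℝ) : ℂ) = normPowSum m w := by
  simp only [normPowSum, mul_conj', pow_mul]
  push_cast
  rfl

theorem normPowSum_ne_zero (m : ℕ) (hz : z ≠ 0) : normPowSum m z ≠ 0 := by
  obtain ⟨i, hi⟩ := Function.ne_iff.mp hz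
  rw [← ofReal_sum_norm_pow_eq_normPowSum, ofReal_ne_zero]
  refine (Finset.sum_pos' (fun i _ => by positivity) ⟨i, Finset.mem_univ i, ?_⟩).ne'
  exact pow_pos (norm_pos_iff.mpr hi) _

theorem differentiableAt_normPowSum (m : ℕ) : DifferentiableAt ℝ (normPowSum m) z := by
  unfold normPowSum; fun_prop

theorem eulerBar_normPowSum (m : ℕ) : eulerBar (normPowSum m) z = m * normPowSum m z := by
  have hsq (i : Fin n) : eulerBar (fun w => w i * conj (w i)) z = 1 * (z i * conj (z i)) := by
    rw [eulerBar_mul (by fun_prop) (by fun_prop), eulerBar_apply, eulerBar_conj_apply]; ring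
  have hpow (i : Fin n) :
      eulerBar (fun w => (w i * conj (w i)) ^ m) z = m * (z i * conj (z i)) ^ m := by
    simpa only [mul_one] using eulerBar_pow_of_eq (by fun_prop) (hsq i) m
  exact eulerBar_sum_of_eq Finset.univ (fun i _ => by fun_prop) (fun i _ => hpow i)

theorem differentiableAt_normPowSum_zpow (m : ℕ) (hz : z ≠ 0) (N : ℤ) :
    DifferentiableAt ℝ (fun w => normPowSum m w ^ N) z :=
  ((differentiableAt_zpow.2 (Or.inl (normPowSum_ne_zero m hz))).restrictScalars ℝ).comp z
    (differentiableAt_normPowSum m)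

theorem eulerBar_mul_normPowSum_zpow {c : ℂ} (hf : DifferentiableAt ℝ f z)
    (hfc : eulerBar f z = c * f z) (m : ℕ) (hz : z ≠ 0) (N : ℤ) :
    eulerBar (fun w => f w * normPowSum m w ^ N) z = (c + N * m) * (f z * normPowSum m z ^ N) :=
  eulerBar_mul_of_eq hf (differentiableAt_normPowSum_zpow m hz N) hfc
    (eulerBar_zpow_of_eq (differentiableAt_normPowSum m) (normPowSum_ne_zero m hz)
      (eulerBar_normPowSum m) N)

/-- For integers `n ≥ 1`, `m ≥ 1`, `α ≥ 0` (here the space is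
`ℂ^(n+1)`, `n : ℕ`, so the dimension is `≥ 1`), at every `z ≠ 0`,
`∑_j ∂/∂z̄_j [ z̄ₙ^{mα} (∏ᵢ z̄ᵢ^{m-1}) z̄ⱼ r_m(z)^{-(α+n)} ] = 0`,
where `r_m(z) = ∑ᵢ |zᵢ|^{2m}`; i.e. the form `u_{α,m}(1,…,n)` is `∂̄`-closed. -/
theorem u_alpha_m_top_degree_dbar_closed (n m α : ℕ) (hm : 1 ≤ m) :
    ∀ z : Fin (n + 1) → ℂ, z ≠ 0 →
      ∑ j : Fin (n + 1),
        wirtingerBar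
          (fun w =>
            (starRingEnd ℂ (w (Fin.last n))) ^ (m * α) *
              (∏ i : Fin (n + 1), (starRingEnd ℂ (w i)) ^ (m - 1)) *
              starRingEnd ℂ (w j) *
              (((∑ i : Fin (n + 1), ‖w i‖ ^ (2 * m) : ℝ) : ℂ)) ^
                (-(α + n + 1 : ℤ)))
          z j = 0 := by
  intro z hz
  set g : (Fin (n + 1) → ℂ) → ℂ := fun w =>
    (conj (w (Fin.last n)) ^ (m * α) * ∏ i, conj (w i) ^ (m - 1)) *
      normPowSum m w ^ (-(α + n + 1 : ℤ)) with hg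
  have hfun (j : Fin (n + 1)) : (fun w : Fin (n + 1) → ℂ =>
      conj (w (Fin.last n)) ^ (m * α) * (∏ i, conj (w i) ^ (m - 1)) * conj (w j) *
        ((∑ i, ‖w i‖ ^ (2 * m) : ℝ) : ℂ) ^ (-(α + n + 1 : ℤ)))
      = fun w => conj (w j) * g w := by
    funext w; rw [ofReal_sum_norm_pow_eq_normPowSum]; ring
  have hdiff : DifferentiableAt ℝ g z :=
    (DifferentiableAt.mul (by fun_prop) (by fun_prop)).mul (differentiableAt_normPowSum_zpow m hz _)
  simp only [hfun]
  rw [sum_wirtingerBar_conj_mul hdiff, hg, eulerBar_mul_normPowSum_zpow (by fun_prop)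
    (eulerBar_conj_pow_mul_prod_conj_pow _ _ _) m hz]
  push_cast [Nat.cast_sub hm]
  ring
end

section
/- Let H₁, H₂ be complex Hilbert spaces, let T : H₁ → H₂ be a densely defined closed linear operator, let T* : H₂ → H₁ be its Hilbert space adjoint, and let L ⊆ dom(T*) be a finite-dimensional subspace. Let S denote the restriction of T* to dom(T*) ∩ L^⊥, regarded as a densely defined operator from the Hilbert space L^⊥ to H₁, and let S* : H₁ → L^⊥ be the Hilbert space adjoint of S. Then dom(S*) = dom(T), and S*u = P(Tu) for every u ∈ dom(T), where P : H₂ → L^⊥ is the orthogonal projection. -/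
/-!
Write `P_L` for the orthogonal projection onto `L`. Since `L ⊆ dom T*`, every `v ∈ dom T*` splits
as `P_L v + P v` with `P v ∈ dom S`; hence `dom S` is dense in `L^⊥` and
`T* v = T* (P_L v) + S (P v)`. For `u ∈ dom T` and `x ∈ dom S` we have
`(S x, u) = (x, T u) = (x, P (T u))`, so `P T ⊆ S*`. Conversely, for `u ∈ dom S*` the functional
`v ↦ (u, T* v)` on `dom T*` is `(u, T* (P_L v)) + (S* u, v)`, and the first summand is bounded
because `L` is finite-dimensional; hence `u ∈ dom T** = dom T`.
-/
open scoped LinearPMap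

/-- The restriction of a partially defined operator `A : H₂ →ₗ. H₁` to
`dom A ∩ L^⊥`, regarded as a partially defined operator from the Hilbert space `L^⊥`
to `H₁`. -/
noncomputable def LinearPMap.restrictOrthoCompl
    {H₁ H₂ : Type*}
    [NormedAddCommGroup H₁] [InnerProductSpace ℂ H₁]
    [NormedAddCommGroup H₂] [InnerProductSpace ℂ H₂]
    (A : H₂ →ₗ.[ℂ] H₁) (L : Submodule ℂ H₂) : ↥Lᗮ →ₗ.[ℂ] H₁ where
  domain := A.domain.comap Lᗮ.subtype
  toFun := A.toFun.comp
    (LinearMap.codRestrict A.domain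
      (Lᗮ.subtype.comp (A.domain.comap Lᗮ.subtype).subtype) (fun c => c.2))

namespace Submodule

variable {𝕜 E F : Type*} [RCLike 𝕜]
  [NormedAddCommGroup E] [InnerProductSpace 𝕜 E] [CompleteSpace E]
  [NormedAddCommGroup F] [InnerProductSpace 𝕜 F] [CompleteSpace F]

theorem adjoint_adjoint {g : Submodule 𝕜 (E × F)} (hg : IsClosed (g : Set (E × F))) :
    g.adjoint.adjoint = g := by
  refine le_antisymm (fun x hx => ?_) (fun x hx => ?_)
  · set G := g.comap (WithLp.linearEquiv 2 𝕜 (E × F)).toLinearMap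
    have : CompleteSpace G :=
      (hg.preimage (WithLp.prod_continuous_ofLp 2 E F)).completeSpace_coe
    -- `G` is `g` inside the `L²` product, where it is closed, hence its double orthocomplement.
    suffices WithLp.toLp 2 x ∈ Gᗮᗮ by rwa [orthogonal_orthogonal] at this
    refine (mem_orthogonal _ _).2 fun w hw => ?_
    have hw_perp : ∀ a b, (a, b) ∈ g → inner 𝕜 w.fst a + inner 𝕜 w.snd b = 0 :=
      fun a b hab => (mem_orthogonal' G w).1 hw (WithLp.toLp 2 (a, b)) hab
    have hw_adj : (w.snd, -w.fst) ∈ g.adjoint := by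
      refine (mem_adjoint_iff _ _).2 fun a b hab => ?_
      rw [inner_neg_right, sub_neg_eq_add, ← inner_conj_symm, ← inner_conj_symm a,
        ← map_add, add_comm, hw_perp a b hab, map_zero]
    have hx_perp := (mem_adjoint_iff _ _).1 hx _ _ hw_adj
    rw [inner_neg_left, neg_sub_left, neg_eq_zero, add_comm] at hx_perp
    simpa using hx_perp
  · refine (mem_adjoint_iff _ _).2 fun a b hab => ?_
    have hx_perp := (mem_adjoint_iff _ _).1 hab _ _ hx
    rw [← inner_conj_symm, ← inner_conj_symm a, ← map_sub, ← neg_sub, hx_perp, neg_zero,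
      map_zero]

end Submodule

namespace LinearPMap

variable {𝕜 E F : Type*} [RCLike 𝕜]
  [NormedAddCommGroup E] [InnerProductSpace 𝕜 E] [CompleteSpace E]
  [NormedAddCommGroup F] [InnerProductSpace 𝕜 F] [CompleteSpace F]
  {T : E →ₗ.[𝕜] F}

theorem adjoint_domain_dense (hT : Dense (T.domain : Set E)) (hclosed : T.IsClosed) :
    Dense (T†.domain : Set F) := by
  refine Submodule.dense_iff_topologicalClosure_eq_top.2 <|
    Submodule.topologicalClosure_eq_top_iff.2 <| (Submodule.eq_bot_iff _).2 fun y hy => ?_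
  have hgraph : (0, y) ∈ T.graph := by
    rw [← Submodule.adjoint_adjoint hclosed, ← adjoint_graph_eq_graph_adjoint hT]
    refine (Submodule.mem_adjoint_iff _ _).2 fun a b hab => ?_
    obtain ⟨a', rfl, -⟩ := (mem_graph_iff _).1 hab
    simp [(Submodule.mem_orthogonal _ _).1 hy a' a'.2]
  simpa [eq_comm] using hgraph

theorem adjoint_adjoint (hT : Dense (T.domain : Set E)) (hclosed : T.IsClosed) : T†† = T :=
  eq_of_eq_graph <| by
    rw [adjoint_graph_eq_graph_adjoint (adjoint_domain_dense hT hclosed),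
      adjoint_graph_eq_graph_adjoint hT, Submodule.adjoint_adjoint hclosed]

section restrictOrthoCompl

variable {H₁ H₂ : Type*}
  [NormedAddCommGroup H₁] [InnerProductSpace ℂ H₁]
  [NormedAddCommGroup H₂] [InnerProductSpace ℂ H₂]
  {A : H₂ →ₗ.[ℂ] H₁} {L : Submodule ℂ H₂}

theorem restrictOrthoCompl_apply (x : (A.restrictOrthoCompl L).domain) :
    A.restrictOrthoCompl L x = A ⟨x, x.2⟩ :=
  rfl

theorem orthogonalProjectionOnto_mem_restrictOrthoCompl_domain [L.HasOrthogonalProjection]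
    (hL : L ≤ A.domain) {v : H₂} (hv : v ∈ A.domain) :
    Lᗮ.orthogonalProjectionOnto v ∈ (A.restrictOrthoCompl L).domain := by
  show (Lᗮ.orthogonalProjectionOnto v : H₂) ∈ A.domain
  rw [Submodule.orthogonalProjectionOnto_orthogonal]
  exact sub_mem hv (hL (L.orthogonalProjectionOnto v).2)

theorem restrictOrthoCompl_domain_dense [L.HasOrthogonalProjection]
    (hA : Dense (A.domain : Set H₂)) (hL : L ≤ A.domain) :
    Dense ((A.restrictOrthoCompl L).domain : Set Lᗮ) := by
  have hP : Function.Surjective Lᗮ.orthogonalProjectionOnto := fun w =>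
    ⟨w, Submodule.orthogonalProjectionOnto_mem_subspace_eq_self w⟩
  refine (hP.denseRange.dense_image (ContinuousLinearMap.continuous _) hA).mono ?_
  rintro _ ⟨v, hv, rfl⟩
  exact orthogonalProjectionOnto_mem_restrictOrthoCompl_domain hL hv

theorem apply_eq_add_restrictOrthoCompl [L.HasOrthogonalProjection] (hL : L ≤ A.domain)
    (v : A.domain) :
    A v = A ⟨L.orthogonalProjectionOnto v, hL (L.orthogonalProjectionOnto v).2⟩ +
      A.restrictOrthoCompl L ⟨Lᗮ.orthogonalProjectionOnto v,
        orthogonalProjectionOnto_mem_restrictOrthoCompl_domain hL v.2⟩ := by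
  rw [restrictOrthoCompl_apply, ← map_add]
  congr
  exact Subtype.ext (L.starProjection_add_starProjection_orthogonal (v : H₂)).symm

variable [CompleteSpace H₁] {T : H₁ →ₗ.[ℂ] H₂}

theorem isFormalAdjoint_restrictOrthoCompl_adjoint (hT : Dense (T.domain : Set H₁))
    [L.HasOrthogonalProjection] :
    (T†.restrictOrthoCompl L).IsFormalAdjoint
      ((Lᗮ.orthogonalProjectionOnto : H₂ →ₗ[ℂ] Lᗮ).compPMap T) := fun x u => by
  rw [LinearMap.compPMap_apply, ContinuousLinearMap.coe_coe,
    Submodule.inner_orthogonalProjectionOnto_eq_of_mem_left, restrictOrthoCompl_apply]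
  exact adjoint_isFormalAdjoint hT ⟨x, x.2⟩ u

theorem restrictOrthoCompl_adjoint_domain_le (hT : Dense (T.domain : Set H₁))
    (hclosed : T.IsClosed) [CompleteSpace H₂] [FiniteDimensional ℂ L] (hL : L ≤ T†.domain) :
    (T†.restrictOrthoCompl L)†.domain ≤ T.domain := by
  set S := T†.restrictOrthoCompl L
  have hS : Dense (S.domain : Set Lᗮ) :=
    restrictOrthoCompl_domain_dense (adjoint_domain_dense hT hclosed) hL
  let B : H₂ →L[ℂ] H₁ :=
    LinearMap.toContinuousLinearMap (T†.toFun ∘ₗ Submodule.inclusion hL) ∘L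
      L.orthogonalProjectionOnto
  intro u hu
  rw [← adjoint_adjoint hT hclosed]
  refine mem_adjoint_domain_of_exists _ ⟨B.adjoint u + S† ⟨u, hu⟩, fun v => ?_⟩
  calc inner ℂ (B.adjoint u + S† ⟨u, hu⟩) (v : H₂)
      = inner ℂ u (B v) + inner ℂ u (S ⟨Lᗮ.orthogonalProjectionOnto v,
          orthogonalProjectionOnto_mem_restrictOrthoCompl_domain hL v.2⟩) := by
        rw [inner_add_left, ContinuousLinearMap.adjoint_inner_left,
          ← Submodule.inner_orthogonalProjectionOnto_eq_of_mem_left]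
        exact congrArg _ (adjoint_isFormalAdjoint hS ⟨u, hu⟩ ⟨_, _⟩)
    _ = inner ℂ u (T† v) := by
        rw [← inner_add_right, apply_eq_add_restrictOrthoCompl hL v]
        rfl

end restrictOrthoCompl

end LinearPMap

/-- Let `T : H₁ → H₂` be a densely defined closed operator between
complex Hilbert spaces, `T*` its adjoint, and `L ⊆ dom T*` finite-dimensional.  Let `S`
be the restriction of `T*` to `dom T* ∩ L^⊥`, viewed as a densely defined operator from
`L^⊥` to `H₁`.  Then the adjoint `S* : H₁ → L^⊥` satisfies `dom S* = dom T` and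
`S* u = P (T u)` for `u ∈ dom T`, where `P : H₂ → L^⊥` is the orthogonal projection. -/
theorem adjoint_of_restriction
    {H₁ H₂ : Type*}
    [NormedAddCommGroup H₁] [InnerProductSpace ℂ H₁] [CompleteSpace H₁]
    [NormedAddCommGroup H₂] [InnerProductSpace ℂ H₂] [CompleteSpace H₂]
    (T : H₁ →ₗ.[ℂ] H₂)
    (hdense : Dense (T.domain : Set H₁)) (hclosed : T.IsClosed)
    (L : Submodule ℂ H₂) [FiniteDimensional ℂ L]
    (hL : (L : Set H₂) ⊆ (T†.domain : Set H₂)) :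
    ((T†.restrictOrthoCompl L)†).domain = T.domain ∧
      ∀ (u : H₁) (hu : u ∈ T.domain) (hu' : u ∈ ((T†.restrictOrthoCompl L)†).domain),
        (T†.restrictOrthoCompl L)† ⟨u, hu'⟩ = Submodule.orthogonalProjection Lᗮ (T ⟨u, hu⟩) := by
  have hS : Dense ((T†.restrictOrthoCompl L).domain : Set Lᗮ) :=
    LinearPMap.restrictOrthoCompl_domain_dense (T.adjoint_domain_dense hdense hclosed) hL
  have hle := (LinearPMap.isFormalAdjoint_restrictOrthoCompl_adjoint (L := L) hdense).le_adjoint hS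
  exact ⟨le_antisymm (LinearPMap.restrictOrthoCompl_adjoint_domain_le hdense hclosed hL) hle.1,
    fun u hu hu' => (hle.2 rfl).symm⟩
end
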